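/- For any simple graph G, gon(G) ≥ min{val(v) : v ∈ V(G)}, the minimum valence of a vertex of G. -/

import Mathlib

/-!
Let `D` be effective of degree `d` and rank at least one, and suppose every valence exceeds `d`.
Among the scripts `f ≥ 0` with `min f = 0` and `D - Δf` effective (finitely many, as `G` is
connected) take one with maximal sum. Its zero set `W` could fire back from `D - Δf`, so in
`D - Δf` each `w ∈ W` carries at least `val w - |W| + 1 ≥ d + 2 - |W|` chips, `G` being simple;
counting chips on `W` shows that some `x ∈ W` carries none. Since `D` has rank at least one, some
script `g` puts a chip on `x`. The set where `g - f` is maximal avoids `x` and can fire from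
`D - Δf`, so adding its indicator to `f` gives an admissible script with larger sum.
-/

/-- A finite loopless multigraph: a finite vertex type, a finite edge type,
and an assignment of an unordered pair of distinct endpoints to each edge. -/
structure Multigraph where
  V : Type
  E : Type
  [fintypeV : Fintype V]
  [fintypeE : Fintype E]
  [decEqV : DecidableEq V]
  ends : E → Sym2 V
  loopless : ∀ e, ¬ (ends e).IsDiag

attribute [instance] Multigraph.fintypeV Multigraph.fintypeE Multigraph.decEqV

namespace Multigraph

/-- The graph obtained by deleting the edges in `W` is connected (finite graphs are
connected iff the vertex set is nonempty and every nonempty proper vertex subset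
has an edge leaving it). -/
def ConnectedWithout (G : Multigraph) (W : Set G.E) : Prop :=
  Nonempty G.V ∧
    ∀ A : Finset G.V, A.Nonempty → A ≠ Finset.univ →
      ∃ e, e ∉ W ∧ ∃ u v, G.ends e = s(u, v) ∧ u ∈ A ∧ v ∉ A

/-- `G` is connected. -/
def Connected (G : Multigraph) : Prop := G.ConnectedWithout ∅

/-- `G` is `k`-edge-connected: deleting any set of at most `k - 1` edges
leaves a connected graph. -/
def EdgeConnected (G : Multigraph) (k : ℕ) : Prop :=
  ∀ W : Finset G.E, W.card < k → G.ConnectedWithout ↑W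

/-- An edge is a bridge if deleting it disconnects the graph. -/
def IsBridge (G : Multigraph) (e : G.E) : Prop := ¬ G.ConnectedWithout {e}

/-- The graph obtained by deleting the vertices in `U` (and all incident edges)
is connected. -/
def ConnectedAvoiding (G : Multigraph) (U : Set G.V) : Prop :=
  (∃ v, v ∉ U) ∧
    ∀ A : Finset G.V, A.Nonempty → (∀ a ∈ A, a ∉ U) → (∃ w, w ∉ U ∧ w ∉ A) →
      ∃ e u v, G.ends e = s(u, v) ∧ u ∈ A ∧ v ∉ A ∧ v ∉ U

/-- `G` is `k`-vertex-connected: deleting any set of at most `k - 1` vertices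
leaves a connected graph. -/
def VertexConnected (G : Multigraph) (k : ℕ) : Prop :=
  ∀ U : Finset G.V, U.card < k → G.ConnectedAvoiding ↑U

/-- `G` is simple: no two distinct edges have the same pair of endpoints. -/
def Simple (G : Multigraph) : Prop :=
  ∀ e e' : G.E, G.ends e = G.ends e' → e = e'

/-- The genus `g(G) = |E| - |V| + 1`. -/
def genus (G : Multigraph) : ℤ :=
  (Fintype.card G.E : ℤ) - (Fintype.card G.V : ℤ) + 1

/-- A tree is a connected graph of genus 0. -/
def IsTree (G : Multigraph) : Prop := G.Connected ∧ G.genus = 0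

/-- The number of edges joining `u` and `v`. -/
noncomputable def numEdges (G : Multigraph) (u v : G.V) : ℕ :=
  Set.ncard {e : G.E | G.ends e = s(u, v)}

/-- The valence of a vertex: the number of incident edges. -/
noncomputable def valence (G : Multigraph) (v : G.V) : ℕ :=
  Set.ncard {e : G.E | v ∈ G.ends e}

/-- A divisor on `G`: an element of the free abelian group on `V(G)`. -/
abbrev Divisor (G : Multigraph) : Type := G.V → ℤ

/-- The degree of a divisor: the sum of its coefficients. -/
def degree (G : Multigraph) (D : G.Divisor) : ℤ := ∑ v, D v

/-- A divisor is effective if all its coefficients are nonnegative. -/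
def Effective (G : Multigraph) (D : G.Divisor) : Prop := ∀ v, 0 ≤ D v

/-- The Laplacian of `G` applied to an integer vector `f`. -/
noncomputable def laplacian (G : Multigraph) (f : G.V → ℤ) : G.Divisor :=
  fun v => ∑ w, (G.numEdges v w : ℤ) * (f v - f w)

/-- Linear equivalence of divisors: the difference is in the image of the Laplacian. -/
def LinEquiv (G : Multigraph) (D D' : G.Divisor) : Prop :=
  ∃ f : G.V → ℤ, D - D' = G.laplacian f

/-- `D - F` is equivalent to an effective divisor for every effective `F` of degree `k`. -/
def RankGe (G : Multigraph) (D : G.Divisor) (k : ℤ) : Prop :=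
  ∀ F : G.Divisor, G.Effective F → G.degree F = k →
    ∃ E' : G.Divisor, G.Effective E' ∧ G.LinEquiv (D - F) E'

/-- The Baker–Norine rank of a divisor. -/
noncomputable def rank (G : Multigraph) (D : G.Divisor) : ℤ :=
  sSup {r : ℤ | r = -1 ∨ (0 ≤ r ∧ G.RankGe D r)}

/-- The (divisorial) gonality of `G`: the minimum degree of an effective divisor
of rank at least 1. -/
noncomputable def gonality (G : Multigraph) : ℕ :=
  sInf {n : ℕ | ∃ D : G.Divisor, G.Effective D ∧ G.degree D = (n : ℤ) ∧ 1 ≤ G.rank D}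

end Multigraph

/-- A morphism of multigraphs: vertices map to vertices, and each edge maps either
to an edge joining the images of its endpoints (if they are distinct) or to the
common image of its endpoints. -/
structure Morphism (G G' : Multigraph) where
  vertexMap : G.V → G'.V
  edgeMap : G.E → G'.E ⊕ G'.V
  map_edge_of_eq : ∀ e u v, G.ends e = s(u, v) → vertexMap u = vertexMap v →
    edgeMap e = Sum.inr (vertexMap u)
  map_edge_of_ne : ∀ e u v, G.ends e = s(u, v) → vertexMap u ≠ vertexMap v →
    ∃ e', edgeMap e = Sum.inl e' ∧ G'.ends e' = s(vertexMap u, vertexMap v)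

namespace Morphism

variable {G G' : Multigraph}

/-- The multiplicity `m_φ(v)` of `φ` at `v` with respect to an edge `e'` of `G'`. -/
noncomputable def mult (φ : Morphism G G') (v : G.V) (e' : G'.E) : ℕ :=
  Set.ncard {e : G.E | v ∈ G.ends e ∧ φ.edgeMap e = Sum.inl e'}

/-- `φ` is harmonic if `m_φ(v)` does not depend on the chosen edge `e'`
incident to `φ(v)`. -/
def Harmonic (φ : Morphism G G') : Prop :=
  ∀ (v : G.V) (e₁ e₂ : G'.E),
    φ.vertexMap v ∈ G'.ends e₁ → φ.vertexMap v ∈ G'.ends e₂ →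
      φ.mult v e₁ = φ.mult v e₂

/-- `φ` is non-degenerate if `m_φ(v) > 0` for every vertex `v`. -/
def Nondegenerate (φ : Morphism G G') : Prop :=
  ∀ (v : G.V) (e' : G'.E), φ.vertexMap v ∈ G'.ends e' → 0 < φ.mult v e'

/-- `φ` has degree `d`: every edge of `G'` has exactly `d` preimages. -/
def HasDegree (φ : Morphism G G') (d : ℕ) : Prop :=
  Nonempty G'.E ∧ ∀ e' : G'.E, Set.ncard {e : G.E | φ.edgeMap e = Sum.inl e'} = d

end Morphism

namespace Multigraph

open Finset

variable {G : Multigraph}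

lemma numEdges_eq_card (u v : G.V) : G.numEdges u v = #{e | G.ends e = s(u, v)} := by
  classical
  rw [numEdges, Set.ncard_eq_toFinset_card', Set.toFinset_ofPred]

lemma numEdges_comm (u v : G.V) : G.numEdges u v = G.numEdges v u := by
  simp only [numEdges, Sym2.eq_swap]

lemma numEdges_self (v : G.V) : G.numEdges v v = 0 := by
  rw [numEdges_eq_card, card_eq_zero, filter_eq_empty_iff]
  exact fun e _ he => G.loopless e (he ▸ Sym2.mk_isDiag_iff.mpr rfl)

lemma numEdges_le_one (hs : G.Simple) (u v : G.V) : G.numEdges u v ≤ 1 := by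
  rw [numEdges_eq_card, card_le_one]
  intro a ha b hb
  exact hs a b ((mem_filter.mp ha).2.trans (mem_filter.mp hb).2.symm)

lemma one_le_numEdges {e : G.E} {u v : G.V} (he : G.ends e = s(u, v)) :
    1 ≤ G.numEdges u v := by
  rw [numEdges_eq_card, Nat.one_le_iff_ne_zero, Ne, card_eq_zero, ← Ne, ← nonempty_iff_ne_empty]
  exact ⟨e, mem_filter.mpr ⟨mem_univ e, he⟩⟩

lemma valence_eq_sum_numEdges (v : G.V) : G.valence v = ∑ u, G.numEdges v u := by
  classical
  have hsplit : ({e | v ∈ G.ends e} : Finset G.E) =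
      univ.biUnion fun u => {e | G.ends e = s(v, u)} := by
    ext e
    simp [Sym2.mem_iff_exists]
  rw [valence, Set.ncard_eq_toFinset_card', Set.toFinset_ofPred, hsplit, card_biUnion]
  · simp only [numEdges_eq_card]
  · intro a _ b _ hab
    refine disjoint_left.mpr fun e ha hb => hab ?_
    exact Sym2.congr_right.mp ((mem_filter.mp ha).2.symm.trans (mem_filter.mp hb).2)

noncomputable def outdeg (G : Multigraph) (A : Finset G.V) (v : G.V) : ℤ :=
  ∑ u ∈ Aᶜ, (G.numEdges v u : ℤ)

lemma outdeg_nonneg (A : Finset G.V) (v : G.V) : 0 ≤ G.outdeg A v :=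
  sum_nonneg fun _ _ => Int.natCast_nonneg _

lemma valence_le_outdeg_add_card (hs : G.Simple) {A : Finset G.V} {v : G.V} (hv : v ∈ A) :
    (G.valence v : ℤ) ≤ G.outdeg A v + (#A - 1) := by
  have hinside : ∑ u ∈ A, (G.numEdges v u : ℤ) ≤ #A - 1 := by
    have hle := sum_le_card_nsmul (A.erase v) (fun u => (G.numEdges v u : ℤ)) 1
      fun u _ => by exact_mod_cast numEdges_le_one hs v u
    rw [← add_sum_erase A _ hv, numEdges_self]
    rw [card_erase_of_mem hv, nsmul_eq_mul, mul_one, Nat.cast_sub (card_pos.mpr ⟨v, hv⟩)] at hle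
    simpa using hle
  rw [valence_eq_sum_numEdges, Nat.cast_sum, ← sum_compl_add_sum A, outdeg]
  omega

lemma laplacian_add (f g : G.V → ℤ) :
    G.laplacian (f + g) = G.laplacian f + G.laplacian g := by
  ext v
  simp only [laplacian, Pi.add_apply, ← sum_add_distrib]
  exact sum_congr rfl fun _ _ => by ring

lemma laplacian_neg (f : G.V → ℤ) : G.laplacian (-f) = -G.laplacian f := by
  ext v
  simp only [laplacian, Pi.neg_apply, ← sum_neg_distrib]
  exact sum_congr rfl fun _ _ => by ring

lemma laplacian_sub (f g : G.V → ℤ) :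
    G.laplacian (f - g) = G.laplacian f - G.laplacian g := by
  rw [sub_eq_add_neg, laplacian_add, laplacian_neg, sub_eq_add_neg]

lemma laplacian_zero : G.laplacian 0 = 0 := by
  ext v
  simp [laplacian]

lemma sum_laplacian (f : G.V → ℤ) : ∑ v, G.laplacian f v = 0 := by
  have hswap : ∑ v, ∑ w, (G.numEdges v w : ℤ) * (f v - f w) =
      -∑ v, ∑ w, (G.numEdges v w : ℤ) * (f v - f w) := by
    conv_lhs => rw [sum_comm]
    rw [← sum_neg_distrib]
    refine sum_congr rfl fun w _ => ?_
    rw [← sum_neg_distrib]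
    exact sum_congr rfl fun v _ => by rw [numEdges_comm]; ring
  simp only [laplacian]
  omega

lemma degree_single (v : G.V) (r : ℤ) : G.degree (Pi.single v r) = r := by
  rw [degree, sum_pi_single', if_pos (mem_univ v)]

lemma effective_single (v : G.V) {r : ℤ} (hr : 0 ≤ r) : G.Effective (Pi.single v r) := by
  intro u
  rcases eq_or_ne u v with rfl | hu <;> simp [*]

lemma degree_add (D D' : G.Divisor) : G.degree (D + D') = G.degree D + G.degree D' :=
  sum_add_distrib

lemma degree_sub (D D' : G.Divisor) : G.degree (D - D') = G.degree D - G.degree D' :=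
  sum_sub_distrib _ _

lemma degree_laplacian (f : G.V → ℤ) : G.degree (G.laplacian f) = 0 :=
  sum_laplacian f

lemma outdeg_le_laplacian {h : G.V → ℤ} {A : Finset G.V} {v : G.V} (hmax : ∀ u, h u ≤ h v)
    (hlt : ∀ u ∉ A, h u < h v) : G.outdeg A v ≤ G.laplacian h v := by
  have hterm : ∀ u, 0 ≤ (G.numEdges v u : ℤ) * (h v - h u) :=
    fun u => mul_nonneg (Int.natCast_nonneg _) (sub_nonneg.mpr (hmax u))
  calc G.outdeg A v ≤ ∑ u ∈ Aᶜ, (G.numEdges v u : ℤ) * (h v - h u) :=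
        sum_le_sum fun u hu => le_mul_of_one_le_right (Int.natCast_nonneg _)
          (by have := hlt u (mem_compl.mp hu); omega)
    _ ≤ G.laplacian h v := sum_le_sum_of_subset_of_nonneg (subset_univ _) fun u _ _ => hterm u

lemma laplacian_indicator_of_mem {A : Finset G.V} {v : G.V} (hv : v ∈ A) :
    G.laplacian ((A : Set G.V).indicator 1) v = G.outdeg A v := by
  rw [laplacian, outdeg, ← sum_compl_add_sum A]
  have hin : ∑ u ∈ A, (G.numEdges v u : ℤ) * ((A : Set G.V).indicator 1 v -
      (A : Set G.V).indicator 1 u) = 0 :=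
    sum_eq_zero fun u hu => by simp [hu, hv]
  rw [hin, add_zero]
  exact sum_congr rfl fun u hu => by simp [hv, mem_compl.mp hu]

lemma laplacian_indicator_nonpos_of_notMem {A : Finset G.V} {v : G.V} (hv : v ∉ A) :
    G.laplacian ((A : Set G.V).indicator 1) v ≤ 0 :=
  sum_nonpos fun u _ => mul_nonpos_of_nonneg_of_nonpos (Int.natCast_nonneg _) (by
    by_cases hu : u ∈ A <;> simp [hu, hv])

lemma eq_of_laplacian_eq_zero (hG : G.Connected) {f : G.V → ℤ} (hf : G.laplacian f = 0)
    (u v : G.V) : f u = f v := by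
  obtain ⟨m, -, hm⟩ := exists_max_image univ f (univ_nonempty_iff.mpr hG.1)
  suffices hM : ({w | f w = f m} : Finset G.V) = univ by
    have hu := mem_univ u
    have hv := mem_univ v
    rw [← hM, mem_filter] at hu hv
    rw [hu.2, hv.2]
  by_contra hM
  obtain ⟨e, -, a, b, he, ha, hb⟩ := hG.2 _ ⟨m, by simp⟩ hM
  rw [mem_filter] at ha hb
  have hcut : G.outdeg {w | f w = f m} a ≤ G.laplacian f a :=
    outdeg_le_laplacian (fun u => ha.2 ▸ hm u (mem_univ u))
      fun u hu => lt_of_le_of_ne (ha.2 ▸ hm u (mem_univ u)) (by simpa [ha.2] using hu)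
  have hab : (G.numEdges a b : ℤ) ≤ G.outdeg {w | f w = f m} a :=
    single_le_sum (fun u _ => Int.natCast_nonneg (G.numEdges a u)) (by simpa using hb)
  have hone : (1 : ℤ) ≤ G.numEdges a b := by exact_mod_cast one_le_numEdges he
  rw [hf, Pi.zero_apply] at hcut
  omega

def normalizedScripts (G : Multigraph) (D : G.Divisor) : Set (G.V → ℤ) :=
  {f | (∀ v, 0 ≤ f v) ∧ (∃ w, f w = 0) ∧ ∀ v, G.laplacian f v ≤ D v}

lemma normalizedScripts_finite (hG : G.Connected) (D : G.Divisor) :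
    (G.normalizedScripts D).Finite := by
  refine Set.Finite.of_finite_image (f := fun f => D - G.laplacian f) ?_ ?_
  · refine (Set.finite_Icc 0 fun _ => G.degree D).subset ?_
    rintro _ ⟨f, ⟨-, -, hf⟩, rfl⟩
    have hE : ∀ v, 0 ≤ D v - G.laplacian f v := fun v => sub_nonneg.mpr (hf v)
    have hsum : ∑ v, (D v - G.laplacian f v) = G.degree D := by
      rw [sum_sub_distrib, sum_laplacian, sub_zero, degree]
    exact ⟨hE, fun v => hsum ▸ single_le_sum (fun u _ => hE u) (mem_univ v)⟩
  · rintro f ⟨hf, ⟨w, hw⟩, -⟩ g ⟨hg, ⟨w', hw'⟩, -⟩ hfg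
    have hL : G.laplacian (f - g) = 0 := by
      rw [laplacian_sub, sub_right_injective hfg, sub_self]
    have hconst := eq_of_laplacian_eq_zero hG hL
    funext v
    have h1 := hconst v w
    have h2 := hconst w' w
    have h3 := hg w
    have h4 := hf w'
    simp only [Pi.sub_apply] at h1 h2
    omega

lemma exists_zero_of_degree_lt_valence (hs : G.Simple) {D : G.Divisor} (hD : G.Effective D)
    (hval : ∀ v, G.degree D < G.valence v) {f : G.V → ℤ} (hf : f ∈ G.normalizedScripts D) :
    ∃ x, f x = 0 ∧ D x ≤ G.laplacian f x := by
  obtain ⟨hf0, ⟨w₀, hw₀⟩, hfD⟩ := hf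
  set W : Finset G.V := {w | f w = 0}
  set d := G.degree D
  by_contra! hpos
  have hlow : ∀ w ∈ W, max 1 (d + 2 - #W) ≤ D w - G.laplacian f w := by
    intro w hw
    have hw0 : f w = 0 := (mem_filter.mp hw).2
    -- `W` is the set where `-f` is maximal, so `W` could fire back from `D - Δf`.
    have hfire : G.outdeg W w ≤ G.laplacian (-f) w :=
      outdeg_le_laplacian (fun u => by simp [hw0, hf0 u]) fun u hu => by
        have := hf0 u
        have : f u ≠ 0 := by simpa [W] using hu
        simp only [Pi.neg_apply, hw0]
        omega
    have hval' := valence_le_outdeg_add_card hs hw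
    rw [laplacian_neg, Pi.neg_apply] at hfire
    have := hval w
    have := hpos w hw0
    have := hD w
    omega
  have hsum : ∑ w ∈ W, (D w - G.laplacian f w) ≤ d := by
    calc ∑ w ∈ W, (D w - G.laplacian f w) ≤ ∑ w, (D w - G.laplacian f w) :=
          sum_le_sum_of_subset_of_nonneg (subset_univ W) fun v _ _ => sub_nonneg.mpr (hfD v)
      _ = d := by rw [sum_sub_distrib, sum_laplacian, sub_zero]; rfl
  have hcount := card_nsmul_le_sum W _ _ hlow
  have hW : 1 ≤ #W := card_pos.mpr ⟨w₀, mem_filter.mpr ⟨mem_univ w₀, hw₀⟩⟩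
  rw [nsmul_eq_mul] at hcount
  rcases le_total (d + 2 - #W) 1 with hk | hk
  · rw [max_eq_left hk] at hcount
    omega
  · rw [max_eq_right hk] at hcount
    nlinarith

lemma exists_add_indicator_mem_normalizedScripts {D : G.Divisor} {f g : G.V → ℤ} {x : G.V}
    (hf : f ∈ G.normalizedScripts D) (hx0 : f x = 0) (hx : D x ≤ G.laplacian f x)
    (hg : G.Effective (D - Pi.single x 1 - G.laplacian g)) :
    ∃ B : Finset G.V, B.Nonempty ∧ f + (B : Set G.V).indicator 1 ∈ G.normalizedScripts D := by
  obtain ⟨m, -, hm⟩ := exists_max_image univ (g - f) ⟨x, mem_univ x⟩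
  set B : Finset G.V := {v | (g - f) v = (g - f) m}
  have hcut : ∀ v ∈ B, G.outdeg B v ≤ G.laplacian g v - G.laplacian f v := by
    intro v hv
    rw [mem_filter] at hv
    rw [← Pi.sub_apply, ← laplacian_sub]
    exact outdeg_le_laplacian (fun u => hv.2 ▸ hm u (mem_univ u))
      fun u hu => lt_of_le_of_ne (hv.2 ▸ hm u (mem_univ u)) (by simpa [B, hv.2] using hu)
  have hxB : x ∉ B := fun hxB => by
    have := hcut x hxB
    have := hg x
    have := outdeg_nonneg B x
    simp only [Pi.sub_apply, Pi.single_eq_same] at *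
    omega
  refine ⟨B, ⟨m, by simp [B]⟩, fun v => ?_, ⟨x, by simp [hx0, hxB]⟩, fun v => ?_⟩
  · have := hf.1 v
    have : (0 : ℤ) ≤ (B : Set G.V).indicator 1 v :=
      Set.indicator_nonneg (fun _ _ => zero_le_one) v
    simp only [Pi.add_apply]
    omega
  · rw [laplacian_add, Pi.add_apply]
    by_cases hv : v ∈ B
    · rw [laplacian_indicator_of_mem hv]
      have := hcut v hv
      have := hg v
      have := effective_single x zero_le_one v
      simp only [Pi.sub_apply] at *
      omega
    · have := laplacian_indicator_nonpos_of_notMem hv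
      have := hf.2.2 v
      omega

theorem exists_valence_le_degree (hG : G.Connected) (hs : G.Simple) {D : G.Divisor}
    (hD : G.Effective D) (hr : G.RankGe D 1) : ∃ v, (G.valence v : ℤ) ≤ G.degree D := by
  by_contra! hval
  have h0 : (0 : G.V → ℤ) ∈ G.normalizedScripts D :=
    ⟨fun _ => le_rfl, ⟨hG.1.some, rfl⟩, fun v => by rw [laplacian_zero]; exact hD v⟩
  obtain ⟨f, hf, hmax⟩ :=
    Set.exists_max_image _ (fun f => ∑ v, f v) (normalizedScripts_finite hG D) ⟨0, h0⟩
  obtain ⟨x, hx0, hx⟩ := exists_zero_of_degree_lt_valence hs hD hval hf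
  obtain ⟨E, hE, g, hg⟩ := hr _ (effective_single x zero_le_one) (degree_single x 1)
  have hgx : G.Effective (D - Pi.single x 1 - G.laplacian g) := by rwa [← hg, sub_sub_cancel]
  obtain ⟨B, ⟨b, hb⟩, hfB⟩ := exists_add_indicator_mem_normalizedScripts hf hx0 hx hgx
  have hgain : 0 < ∑ v, (B : Set G.V).indicator (1 : G.V → ℤ) v :=
    lt_of_lt_of_le (by simp [hb])
      (single_le_sum (fun v _ => Set.indicator_nonneg (fun _ _ => zero_le_one) v) (mem_univ b))
  have := hmax _ hfB
  simp only [Pi.add_apply, sum_add_distrib] at this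
  omega

lemma RankGe.le_degree [Nonempty G.V] {D : G.Divisor} {r : ℤ} (h : G.RankGe D r) (hr : 0 ≤ r) :
    r ≤ G.degree D := by
  let v : G.V := Classical.arbitrary _
  obtain ⟨E, hE, g, hg⟩ := h _ (effective_single v hr) (degree_single v r)
  have hsum := congrArg G.degree hg
  have hE0 : 0 ≤ G.degree E := sum_nonneg fun u _ => hE u
  rw [degree_sub, degree_sub, degree_single, degree_laplacian] at hsum
  omega

lemma RankGe.mono [Nonempty G.V] {D : G.Divisor} {r s : ℤ} (h : G.RankGe D r) (hsr : s ≤ r) :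
    G.RankGe D s := by
  intro F hF hdeg
  let v : G.V := Classical.arbitrary _
  have hpad := effective_single v (sub_nonneg.mpr hsr)
  obtain ⟨E, hE, g, hg⟩ := h (F + Pi.single v (r - s)) (fun u => add_nonneg (hF u) (hpad u))
    (by rw [degree_add, hdeg, degree_single]; ring)
  exact ⟨E + Pi.single v (r - s), fun u => add_nonneg (hE u) (hpad u), g, by rw [← hg]; abel⟩

lemma exists_rankGe_of_one_le_rank {D : G.Divisor} (h : 1 ≤ G.rank D) :
    ∃ r, 1 ≤ r ∧ G.RankGe D r := by
  have hbdd : BddAbove {r : ℤ | r = -1 ∨ (0 ≤ r ∧ G.RankGe D r)} := by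
    by_contra hb
    rw [rank, Int.csSup_of_not_bddAbove hb] at h
    omega
  rcases Int.csSup_mem ⟨-1, Or.inl rfl⟩ hbdd with hr | ⟨-, hr⟩
  · rw [rank, hr] at h
    omega
  · exact ⟨_, h, hr⟩

lemma one_le_rank_iff [Nonempty G.V] {D : G.Divisor} : 1 ≤ G.rank D ↔ G.RankGe D 1 := by
  refine ⟨fun h => ?_, fun h => ?_⟩
  · obtain ⟨r, hr, hrD⟩ := exists_rankGe_of_one_le_rank h
    exact hrD.mono hr
  · have hbdd : BddAbove {r : ℤ | r = -1 ∨ (0 ≤ r ∧ G.RankGe D r)} := by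
      refine ⟨max (G.degree D) 0, ?_⟩
      rintro r (rfl | ⟨hr, hrD⟩)
      · omega
      · exact (hrD.le_degree hr).trans (le_max_left _ _)
    exact le_csSup hbdd (Or.inr ⟨zero_le_one, h⟩)

lemma linEquiv_refl (D : G.Divisor) : G.LinEquiv D D :=
  ⟨0, by rw [sub_self, laplacian_zero]⟩

lemma rankGe_one_one : G.RankGe 1 1 := by
  intro F hF hdeg
  refine ⟨1 - F, fun v => ?_, linEquiv_refl _⟩
  have : F v ≤ 1 := hdeg ▸ single_le_sum (fun u _ => hF u) (mem_univ v)
  simp only [Pi.sub_apply, Pi.one_apply]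
  omega

lemma exists_effective_degree_eq_gonality [Nonempty G.V] :
    ∃ D, G.Effective D ∧ G.degree D = G.gonality ∧ 1 ≤ G.rank D := by
  have hne : {n : ℕ | ∃ D, G.Effective D ∧ G.degree D = n ∧ 1 ≤ G.rank D}.Nonempty :=
    ⟨Fintype.card G.V, 1, fun _ => zero_le_one, by simp [degree],
      one_le_rank_iff.mpr rankGe_one_one⟩
  exact Nat.sInf_mem hne

end Multigraph

/-- For a simple graph `G`, `gon(G) ≥ min {val(v) : v ∈ V(G)}`. -/
theorem stmt_7 (G : Multigraph) (hG : G.Connected) (hs : G.Simple) :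
    sInf (Set.range G.valence) ≤ G.gonality := by
  have := hG.1
  obtain ⟨D, hD, hdeg, hrank⟩ := G.exists_effective_degree_eq_gonality
  obtain ⟨v, hv⟩ := Multigraph.exists_valence_le_degree hG hs hD (G.one_le_rank_iff.mp hrank)
  exact (Nat.sInf_le (Set.mem_range_self v)).trans (by omega)
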